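/- Let n be an even integer with n ≥ 2. Let u₁, …, u_n be a basis of 𝔽₂ⁿ and let u¹, …, uⁿ ∈ 𝔽₂ⁿ satisfy uⁱ·u_j = δ_{i,j} (the dual basis with respect to the dot product). Let T ⊆ {1, …, n} with |T| = n/2, let A = Span{uᵢ : i ∉ T}, let θ ∈ 𝔽₂ⁿ be the indicator vector of the complement of T (θᵢ = 1 iff i ∉ T), let x ∈ 𝔽₂ⁿ, and set s = Σ_{i∈T} xᵢ uᵢ and s' = Σ_{i∉T} xᵢ uⁱ. Let L : 𝔽₂ⁿ → 𝔽₂ⁿ be the invertible linear map L(y) = Σᵢ yᵢ uᵢ and let U_L be the unitary on ℂ^{𝔽₂ⁿ} permuting basis vectors by U_L e_y = e_{L(y)}. Then |A_{s,s'}⟩ = U_L |x⟩_θ; equivalently, for every v ∈ 𝔽₂ⁿ, the e_v-coefficient of |A_{s,s'}⟩ equals the e_{L⁻¹(v)}-coefficient of |x⟩_θ. -/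

import Mathlib

/-- The sign `(-1)^b` for `b ∈ 𝔽₂`. -/
noncomputable def sgn (b : ZMod 2) : ℂ := if b = 0 then 1 else -1

/-- Dot product on `𝔽₂ⁿ`. -/
def dot {n : ℕ} (x y : Fin n → ZMod 2) : ZMod 2 := ∑ i, x i * y i

open Classical in
/-- The coset state `|A_{s,s'}⟩ = |A|^{-1/2} Σ_{u∈A} (-1)^{u·s'} e_{u+s}`, written
coefficient-wise. -/
noncomputable def cosetState {n : ℕ} (A : Submodule (ZMod 2) (Fin n → ZMod 2))
    (s s' : Fin n → ZMod 2) : (Fin n → ZMod 2) → ℂ :=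
  fun v => if v + s ∈ A then sgn (dot (v + s) s') / Real.sqrt (Nat.card A) else 0

/-- The BB'84 state `|x⟩_θ = ⊗ᵢ H^{θᵢ}|xᵢ⟩`, written coefficient-wise. -/
noncomputable def bb84 {n : ℕ} (x θ : Fin n → ZMod 2) : (Fin n → ZMod 2) → ℂ :=
  fun v => ∏ i, if θ i = 0 then (if v i = x i then 1 else 0) else sgn (x i * v i) / Real.sqrt 2

lemma sgn_add (a c : ZMod 2) : sgn (a + c) = sgn a * sgn c := by
  have h : (1 : ZMod 2) + 1 = 0 := by decide
  have ha : a = 0 ∨ a = 1 := by revert a; decide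
  have hc : c = 0 ∨ c = 1 := by revert c; decide
  rcases ha with rfl | rfl <;> rcases hc with rfl | rfl <;> simp [sgn, h]

lemma sgn_sum {ι : Type*} (S : Finset ι) (f : ι → ZMod 2) :
    sgn (∑ i ∈ S, f i) = ∏ i ∈ S, sgn (f i) := by
  induction S using Finset.cons_induction with
  | empty => simp [sgn]
  | cons i S hi ih => rw [Finset.sum_cons, Finset.prod_cons, sgn_add, ih]

lemma dot_sum_right {n : ℕ} {ι : Type*} (a : Fin n → ZMod 2) (S : Finset ι)
    (f : ι → (Fin n → ZMod 2)) :
    dot a (∑ i ∈ S, f i) = ∑ i ∈ S, dot a (f i) := by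
  simp only [dot, Finset.sum_apply, Finset.mul_sum]
  exact Finset.sum_comm

lemma dot_smul_right {n : ℕ} (a : Fin n → ZMod 2) (r : ZMod 2) (w : Fin n → ZMod 2) :
    dot a (r • w) = r * dot a w := by
  simp only [dot, Pi.smul_apply, smul_eq_mul, Finset.mul_sum]
  exact Finset.sum_congr rfl fun i _ => by ring

lemma dot_comm {n : ℕ} (a c : Fin n → ZMod 2) : dot a c = dot c a := by
  simp only [dot, mul_comm]

lemma sqrt_two_pow (k : ℕ) : Real.sqrt ((2:ℝ)^k) = (Real.sqrt 2)^k := by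
  induction k with
  | zero => simp
  | succ k ih => rw [pow_succ, pow_succ, Real.sqrt_mul (by positivity), ih]

/-- The Claim of Section 5 of the paper: with `u₁,…,u_n` a basis of `𝔽₂ⁿ` with dual basis
`u¹,…,uⁿ`, `T` of size `n/2`, `A = Span{uᵢ : i ∉ T}`, `θ` the indicator of `Tᶜ`,
`s = Σ_{i∈T} xᵢuᵢ`, `s' = Σ_{i∉T} xᵢuⁱ`, and `L(y) = Σᵢ yᵢuᵢ`, we have
`|A_{s,s'}⟩ = U_L |x⟩_θ`, i.e. the `e_v`-coefficient of `|A_{s,s'}⟩` is the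
`e_{L⁻¹(v)}`-coefficient of `|x⟩_θ`. -/
theorem coset_state_eq_bb84 (n : ℕ) (hn : 2 ≤ n) (hne : Even n)
    (b : Module.Basis (Fin n) (ZMod 2) (Fin n → ZMod 2))
    (u' : Fin n → (Fin n → ZMod 2))
    (hdual : ∀ i j, dot (u' i) (b j) = if i = j then 1 else 0)
    (T : Finset (Fin n)) (hT : T.card = n / 2)
    (A : Submodule (ZMod 2) (Fin n → ZMod 2))
    (hA : A = Submodule.span (ZMod 2) (⇑b '' {i | i ∉ T}))
    (θ : Fin n → ZMod 2) (hθ : ∀ i, θ i = if i ∈ T then 0 else 1)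
    (x : Fin n → ZMod 2)
    (s s' : Fin n → ZMod 2)
    (hs : s = ∑ i ∈ T, x i • b i) (hs' : s' = ∑ i ∈ Tᶜ, x i • u' i)
    (L : (Fin n → ZMod 2) ≃ₗ[ZMod 2] (Fin n → ZMod 2))
    (hL : ∀ y, L y = ∑ i, y i • b i) :
    ∀ v, cosetState A s s' v = bb84 x θ (L.symm v) := by
  classical
  -- basic numerology
  have h2 : n / 2 * 2 = n := Nat.div_mul_cancel hne.two_dvd
  have hTc : Tᶜ.card = n / 2 := by
    have := Finset.card_compl T
    rw [hT, Fintype.card_fin] at this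
    omega
  intro v
  set y : Fin n → ZMod 2 := L.symm v with hy
  have hv : v = ∑ i, y i • b i := by rw [← hL y, hy, L.apply_symm_apply]
  set z : Fin n → ZMod 2 := fun i => y i + (if i ∈ T then x i else 0) with hz
  have hvs : v + s = ∑ i, z i • b i := by
    rw [hv, hs]
    have : (∑ i ∈ T, x i • b i) = ∑ i, (if i ∈ T then x i else 0) • b i :=
      (Finset.sum_congr rfl fun i hi => by rw [if_pos hi]).trans
        (Finset.sum_subset (Finset.subset_univ T) fun i _ hi => by simp [hi])
    rw [this, ← Finset.sum_add_distrib]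
    exact Finset.sum_congr rfl fun i _ => by rw [hz, add_smul]
  have haddz : ∀ a c : ZMod 2, a + c = 0 ↔ a = c := by decide
  have hrepr : ∀ i, b.repr (v + s) i = z i := by
    intro i
    rw [hvs, ← b.equivFun_symm_apply]
    have h := b.equivFun.apply_symm_apply z
    rw [Module.Basis.equivFun_apply] at h
    exact congrFun h i
  -- membership characterization
  have hmem : v + s ∈ A ↔ ∀ i ∈ T, y i = x i := by
    rw [hA, b.mem_span_image]
    constructor
    · intro h i hiT
      have : b.repr (v + s) i = 0 := by
        by_contra hne0
        exact (h (by simpa [Finsupp.mem_support_iff] using hne0)) hiT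
      rw [hrepr i, hz] at this
      simp only [if_pos hiT] at this
      exact (haddz _ _).mp this
    · intro h i hi
      simp only [Finset.mem_coe, Finsupp.mem_support_iff] at hi
      simp only [Set.mem_setOf_eq]
      intro hiT
      apply hi
      rw [hrepr i, hz]
      simp only [if_pos hiT]
      exact (haddz _ _).mpr (h i hiT)
  -- cardinality of A
  have hcardA : (Nat.card A : ℝ) = 2 ^ (n / 2) := by
    have hli : LinearIndependent (ZMod 2) (fun i : {i : Fin n // i ∉ T} => b i) :=
      b.linearIndependent.comp _ Subtype.val_injective
    have hrange : Set.range (fun i : {i : Fin n // i ∉ T} => b i) = ⇑b '' {i | i ∉ T} :=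
      Set.ext fun w => ⟨fun ⟨⟨i, hi⟩, hw⟩ => ⟨i, hi, hw⟩, fun ⟨i, hi, hw⟩ => ⟨⟨i, hi⟩, hw⟩⟩
    have hbasis : Module.Basis {i : Fin n // i ∉ T} (ZMod 2) A := by
      rw [hA, ← hrange]; exact Module.Basis.span hli
    have : Fintype.card A = Fintype.card (ZMod 2) ^ Fintype.card {i : Fin n // i ∉ T} :=
      Module.card_fintype hbasis
    have hc : Fintype.card {i : Fin n // i ∉ T} = n / 2 := by
      rw [← hTc, Fintype.card_subtype]
      congr 1
      ext i
      simp [Finset.mem_compl]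
    rw [Nat.card_eq_fintype_card, this, hc, ZMod.card]
    push_cast
    ring
  -- dot product computation
  have hdotz : ∀ j, dot (u' j) (v + s) = z j := by
    intro j
    rw [hvs, dot_sum_right]
    have h : ∀ i, dot (u' j) (z i • b i) = if j = i then z i else 0 := by
      intro i
      rw [dot_smul_right, hdual j i]
      split <;> ring
    simp only [h]
    simp
  have hdot : dot (v + s) s' = ∑ j ∈ Tᶜ, x j * y j := by
    rw [hs', dot_sum_right]
    refine Finset.sum_congr rfl fun j hj => ?_
    rw [dot_smul_right, dot_comm, hdotz j]
    simp only [Finset.mem_compl] at hj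
    simp [hz, hj]
  -- split on membership
  by_cases hm : v + s ∈ A
  · have hyx : ∀ i ∈ T, y i = x i := hmem.mp hm
    rw [cosetState, if_pos hm, hdot, sgn_sum, bb84]
    rw [← Finset.prod_mul_prod_compl T]
    have h1 : (∏ i ∈ T, if θ i = 0 then (if y i = x i then (1:ℂ) else 0)
        else sgn (x i * y i) / Real.sqrt 2) = 1 := by
      refine Finset.prod_eq_one fun i hi => ?_
      rw [hθ i, if_pos hi, if_pos rfl, if_pos (hyx i hi)]
    have h2' : (∏ i ∈ Tᶜ, if θ i = 0 then (if y i = x i then (1:ℂ) else 0)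
        else sgn (x i * y i) / Real.sqrt 2)
        = (∏ i ∈ Tᶜ, sgn (x i * y i)) / (Real.sqrt 2 : ℂ) ^ (n / 2) := by
      have h : ∀ i ∈ Tᶜ, (if θ i = 0 then (if y i = x i then (1:ℂ) else 0)
          else sgn (x i * y i) / Real.sqrt 2) = sgn (x i * y i) / (Real.sqrt 2 : ℂ) := by
        intro i hi
        have hi' : i ∉ T := Finset.mem_compl.mp hi
        rw [hθ i, if_neg hi', if_neg one_ne_zero]
      rw [Finset.prod_congr rfl h, Finset.prod_div_distrib, Finset.prod_const, hTc]
    rw [h1, h2', one_mul, hcardA]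
    have : Real.sqrt ((2:ℝ) ^ (n / 2)) = (Real.sqrt 2) ^ (n / 2) := sqrt_two_pow _
    rw [this]
    push_cast
    rfl
  · rw [cosetState, if_neg hm, bb84]
    have : ∃ i ∈ T, y i ≠ x i := by
      by_contra h
      push_neg at h
      exact hm (hmem.mpr h)
    obtain ⟨i, hiT, hne'⟩ := this
    refine (Finset.prod_eq_zero (Finset.mem_univ i) ?_).symm
    rw [hθ i, if_pos hiT, if_pos rfl, if_neg hne']
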